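/- A retract of a well-filtered T0 space is well-filtered; that is, if X is well-filtered and there are continuous maps f : X → Y and g : Y → X with f ∘ g = id_Y (Y a T0 space), then Y is well-filtered. -/

import Mathlib

open Set

universe u

variable {α : Type u}

/-- The specialization order used in the paper: `x ≤ y` iff `x ∈ closure {y}`. -/
def specLE [TopologicalSpace α] (x y : α) : Prop := x ∈ closure ({y} : Set α)

/-- `↑x = {y | x ≤ y}` in the specialization order. -/
def upOf [TopologicalSpace α] (x : α) : Set α := {y | specLE x y}

/-- `↑F = {y | ∃ a ∈ F, a ≤ y}` in the specialization order. -/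
def upSetOf [TopologicalSpace α] (F : Set α) : Set α := {y | ∃ a ∈ F, specLE a y}

/-- `↓B = {x | ∃ b ∈ B, x ≤ b}` in the specialization order. -/
def downOf [TopologicalSpace α] (B : Set α) : Set α := {x | ∃ b ∈ B, specLE x b}

/-- A set directed with respect to the specialization order: nonempty, and any two
elements have an upper bound in it. -/
def SDirected [TopologicalSpace α] (D : Set α) : Prop :=
  D.Nonempty ∧ ∀ a ∈ D, ∀ b ∈ D, ∃ c ∈ D, specLE a c ∧ specLE b c

/-- `s` is a supremum (least upper bound) of `D` in the specialization order. -/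
def SIsSup [TopologicalSpace α] (D : Set α) (s : α) : Prop :=
  (∀ d ∈ D, specLE d s) ∧ ∀ t : α, (∀ d ∈ D, specLE d t) → specLE s t

/-- Upper set (= saturated set) in the specialization order. -/
def SUpper [TopologicalSpace α] (A : Set α) : Prop :=
  ∀ ⦃x y : α⦄, x ∈ A → specLE x y → y ∈ A

/-- Scott open set with respect to the specialization order. -/
def SScottOpen [TopologicalSpace α] (U : Set α) : Prop :=
  SUpper U ∧ ∀ D : Set α, SDirected D → ∀ s : α, SIsSup D s → s ∈ U → (D ∩ U).Nonempty

/-- A d-space: a dcpo under the specialization order, all open sets Scott open. -/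
def IsDSpace (α : Type u) [TopologicalSpace α] : Prop :=
  (∀ D : Set α, SDirected D → ∃ s : α, SIsSup D s) ∧
    ∀ U : Set α, IsOpen U → SScottOpen U

/-- Member of `K(X)`: nonempty, compact and saturated. -/
def IsKSet [TopologicalSpace α] (K : Set α) : Prop :=
  K.Nonempty ∧ IsCompact K ∧ SUpper K

/-- A filtered family of sets: nonempty, and any two members contain a common member. -/
def FilteredFam (𝒦 : Set (Set α)) : Prop :=
  𝒦.Nonempty ∧ ∀ K1 ∈ 𝒦, ∀ K2 ∈ 𝒦, ∃ K3 ∈ 𝒦, K3 ⊆ K1 ∩ K2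

/-- Well-filtered space: for every filtered family of nonempty compact saturated sets whose
intersection is contained in an open `U`, some member is contained in `U`. -/
def IsWellFiltered (α : Type u) [TopologicalSpace α] : Prop :=
  ∀ 𝒦 : Set (Set α), (∀ K ∈ 𝒦, IsKSet K) → FilteredFam 𝒦 →
    ∀ U : Set α, IsOpen U → ⋂₀ 𝒦 ⊆ U → ∃ K ∈ 𝒦, K ⊆ U

/-- Rudin set: a nonempty set `A` such that for some filtered family `𝒦 ⊆ K(X)`,
`closure A` is a minimal closed set meeting every member of `𝒦`. -/
def IsRudin [TopologicalSpace α] (A : Set α) : Prop :=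
  A.Nonempty ∧ ∃ 𝒦 : Set (Set α), (∀ K ∈ 𝒦, IsKSet K) ∧ FilteredFam 𝒦 ∧
    (∀ K ∈ 𝒦, (closure A ∩ K).Nonempty) ∧
    ∀ B : Set α, IsClosed B → B ⊆ closure A → (∀ K ∈ 𝒦, (B ∩ K).Nonempty) → B = closure A

/-- Well-filtered determined set: every continuous map into a well-filtered T0 space sends it
to a set whose closure is the closure of a unique point. -/
def IsWFD [TopologicalSpace α] (A : Set α) : Prop :=
  ∀ (Y : Type u) [TopologicalSpace Y] [T0Space Y], IsWellFiltered Y →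
    ∀ f : α → Y, Continuous f → ∃! y : Y, closure (f '' A) = closure ({y} : Set Y)

/-- Irreducible set. -/
def IsIrred [TopologicalSpace α] (A : Set α) : Prop :=
  A.Nonempty ∧ ∀ F1 F2 : Set α, IsClosed F1 → IsClosed F2 → A ⊆ F1 ∪ F2 → A ⊆ F1 ∨ A ⊆ F2

/-- Sober space: every irreducible closed set is the closure of a unique point. -/
def IsSober (α : Type u) [TopologicalSpace α] : Prop :=
  ∀ A : Set α, IsClosed A → IsIrred A → ∃! x : α, A = closure ({x} : Set α)

/-- `A` has a maximal element with respect to the specialization order. -/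
def HasMaxElem [TopologicalSpace α] (A : Set α) : Prop :=
  ∃ m ∈ A, ∀ a ∈ A, specLE m a → a = m

/-- Strong d-space. -/
def IsStrongDSpace (α : Type u) [TopologicalSpace α] : Prop :=
  ∀ D : Set α, SDirected D → ∀ x : α, ∀ U : Set α, IsOpen U →
    (⋂ d ∈ D, upOf d) ∩ upOf x ⊆ U → ∃ d ∈ D, upOf d ∩ upOf x ⊆ U

/-!
Pull a filtered family `𝒦 ⊆ K(Y)` back along the section `g : Y → X` by `K ↦ ↑g(K)`. This is
a filtered family in `K(X)`, and since `f` is continuous and `f ∘ g = id`, each `↑g(K)` lies in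
`f⁻¹(K)`. Well-filteredness of `X` puts some `↑g(K)` inside `f⁻¹(U)`, and applying `f` to
`g(K) ⊆ ↑g(K)` gives `K ⊆ U`.
-/

section Saturation

variable [TopologicalSpace α]

theorem specLE_iff_specializes {x y : α} : specLE x y ↔ y ⤳ x :=
  specializes_iff_mem_closure.symm

theorem specLE_refl (x : α) : specLE x x :=
  specLE_iff_specializes.2 (specializes_refl x)

theorem specLE_trans {x y z : α} (hxy : specLE x y) (hyz : specLE y z) : specLE x z :=
  specLE_iff_specializes.2 <|
    (specLE_iff_specializes.1 hyz).trans (specLE_iff_specializes.1 hxy)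

theorem specLE_map {β : Type u} [TopologicalSpace β] {f : α → β} (hf : Continuous f) {x y : α}
    (h : specLE x y) : specLE (f x) (f y) :=
  specLE_iff_specializes.2 ((specLE_iff_specializes.1 h).map hf)

theorem IsOpen.sUpper {U : Set α} (hU : IsOpen U) : SUpper U :=
  fun _ _ hx hxy => (specLE_iff_specializes.1 hxy).mem_open hU hx

theorem SUpper.preimage {β : Type u} [TopologicalSpace β] {T : Set β} (hT : SUpper T)
    {f : α → β} (hf : Continuous f) : SUpper (f ⁻¹' T) :=
  fun _ _ hx hxy => hT hx (specLE_map hf hxy)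

theorem subset_upSetOf (S : Set α) : S ⊆ upSetOf S :=
  fun a ha => ⟨a, ha, specLE_refl a⟩

theorem upSetOf_subset {S T : Set α} (hT : SUpper T) (hST : S ⊆ T) : upSetOf S ⊆ T := by
  rintro y ⟨a, ha, hay⟩
  exact hT (hST ha) hay

theorem upSetOf_mono {S T : Set α} (hST : S ⊆ T) : upSetOf S ⊆ upSetOf T := by
  rintro y ⟨a, ha, hay⟩
  exact ⟨a, hST ha, hay⟩

theorem sUpper_upSetOf (S : Set α) : SUpper (upSetOf S) := by
  rintro x y ⟨a, ha, hax⟩ hxy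
  exact ⟨a, ha, specLE_trans hax hxy⟩

theorem isCompact_upSetOf {S : Set α} (hS : IsCompact S) : IsCompact (upSetOf S) := by
  refine isCompact_of_finite_subcover fun V hV hcover => ?_
  obtain ⟨t, ht⟩ := hS.elim_finite_subcover V hV ((subset_upSetOf S).trans hcover)
  exact ⟨t, upSetOf_subset (isOpen_biUnion fun i _ => hV i).sUpper ht⟩

theorem IsKSet.upSetOf_image {β : Type u} [TopologicalSpace β] {K : Set β} (hK : IsKSet K)
    {g : β → α} (hg : Continuous g) : IsKSet (upSetOf (g '' K)) :=
  ⟨(hK.1.image g).mono (subset_upSetOf _), isCompact_upSetOf (hK.2.1.image hg),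
    sUpper_upSetOf _⟩

theorem upSetOf_image_subset_preimage {β : Type u} [TopologicalSpace β] {K : Set β}
    (hK : SUpper K) {f : α → β} {g : β → α} (hf : Continuous f)
    (hfg : Function.LeftInverse f g) : upSetOf (g '' K) ⊆ f ⁻¹' K :=
  upSetOf_subset (hK.preimage hf) (image_subset_preimage_of_inverse hfg K)

end Saturation

theorem FilteredFam.image {β : Type u} {𝒦 : Set (Set α)} (h𝒦 : FilteredFam 𝒦)
    {φ : Set α → Set β} (hφ : Monotone φ) : FilteredFam (φ '' 𝒦) := by
  obtain ⟨⟨K₀, hK₀⟩, hdir⟩ := h𝒦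
  refine ⟨⟨φ K₀, mem_image_of_mem φ hK₀⟩, ?_⟩
  rintro _ ⟨K₁, hK₁, rfl⟩ _ ⟨K₂, hK₂, rfl⟩
  obtain ⟨K₃, hK₃, hsub⟩ := hdir K₁ hK₁ K₂ hK₂
  exact ⟨φ K₃, mem_image_of_mem φ hK₃,
    subset_inter (hφ (hsub.trans inter_subset_left)) (hφ (hsub.trans inter_subset_right))⟩

theorem stmt_11_general {α : Type u} {β : Type u} [TopologicalSpace α]
    [TopologicalSpace β] (hα : IsWellFiltered α)
    (f : α → β) (g : β → α) (hf : Continuous f) (hg : Continuous g)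
    (hfg : f ∘ g = id) : IsWellFiltered β := by
  intro 𝒦 h𝒦 hfil U hU hsub
  have hinv : Function.LeftInverse f g := Function.leftInverse_iff_comp.2 hfg
  let lift : Set β → Set α := fun K => upSetOf (g '' K)
  have hlift : ∀ K ∈ lift '' 𝒦, IsKSet K :=
    forall_mem_image.2 fun K hK => (h𝒦 K hK).upSetOf_image hg
  have hlift_filtered : FilteredFam (lift '' 𝒦) :=
    hfil.image fun _ _ h => upSetOf_mono (image_mono h)
  have hlift_inter : ⋂₀ (lift '' 𝒦) ⊆ f ⁻¹' U := fun x hx => hsub fun K hK =>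
    upSetOf_image_subset_preimage (h𝒦 K hK).2.2 hf hinv (hx _ (mem_image_of_mem lift hK))
  obtain ⟨_, ⟨K, hK, rfl⟩, hKU⟩ :=
    hα _ hlift hlift_filtered (f ⁻¹' U) (hU.preimage hf) hlift_inter
  refine ⟨K, hK, fun b hb => ?_⟩
  simpa only [mem_preimage, hinv b] using hKU (subset_upSetOf _ (mem_image_of_mem g hb))

/-- a retract of a well-filtered T0 space is well-filtered. -/
theorem stmt_11 {α : Type u} {β : Type u} [TopologicalSpace α] [T0Space α]
    [TopologicalSpace β] [T0Space β] (hα : IsWellFiltered α)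
    (f : α → β) (g : β → α) (hf : Continuous f) (hg : Continuous g)
    (hfg : f ∘ g = id) : IsWellFiltered β :=
  stmt_11_general hα f g hf hg hfg
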